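/- Let S = (D, loc, Supp) be a structuring of (Σ, Ax, Lem), N a node of D, and P = {N_1, N_2} a partitioning of N with N_1 lemma independent, and let D' be the development graph of the vertical split of S with respect to N and P. Then Dom_D(N) = Dom_{D'}(N_2), and consequently Dom_{Roots(D')} = Dom_{Roots(D)}. -/

import Mathlib

open Classical

/-! # Development graphs and structurings

Entities come from a fixed type `E`, partitioned into signature symbols, axioms and
lemmas by a kind function `kind : E → EKind`.  A development graph is a finite acyclic
directed graph whose nodes are triples of sets of entities (local signature, local
axioms, local lemmas) and whose links are global definition links labelled with
signature morphisms `σ : E → E`. -/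

/-- The three kinds of entities: signature symbols, axioms and lemmas. -/
inductive EKind : Type
  | sig
  | ax
  | lem
deriving DecidableEq

/-- A development graph node `N = (sig^N, ax^N, lem^N)`. -/
structure DGNode (E : Type*) where
  sig : Set E
  ax : Set E
  lem : Set E

/-- The local domain `dom^N := sig^N ∪ ax^N ∪ lem^N`. -/
def DGNode.localDom {E : Type*} (N : DGNode E) : Set E := N.sig ∪ N.ax ∪ N.lem

/-- A global definition link `src →mor tgt`. -/
structure DGLink (E : Type*) where
  src : DGNode E
  mor : E → E
  tgt : DGNode E

/-- A development graph: a finite acyclic directed graph of nodes and links. -/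
structure DevGraph (E : Type*) where
  nodes : Set (DGNode E)
  links : Set (DGLink E)
  src_mem : ∀ l ∈ links, l.src ∈ nodes
  tgt_mem : ∀ l ∈ links, l.tgt ∈ nodes
  finite_nodes : nodes.Finite
  finite_links : links.Finite
  acyclic : ∀ N, ¬ Relation.TransGen (fun M K => ∃ l ∈ links, l.src = M ∧ l.tgt = K) N N

namespace DevGraph

variable {E : Type*}

/-- `e ∈ Dom_D(N)`: the domain of a node is the union of its local domain with the
images `σ(Dom_D(M))` over all incoming links `M →σ N`. -/
inductive InDom (D : DevGraph E) : DGNode E → E → Prop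
  | loc {N : DGNode E} {e : E} : N ∈ D.nodes → e ∈ N.localDom → InDom D N e
  | link {l : DGLink E} {e : E} : l ∈ D.links → InDom D l.src e → InDom D l.tgt (l.mor e)

/-- `Dom_D(N)`. -/
def Dom (D : DevGraph E) (N : DGNode E) : Set E := {e | D.InDom N e}

/-- `Dom_D`: the union of `Dom_D(N)` over all nodes. -/
def DomAll (D : DevGraph E) : Set E := ⋃ N ∈ D.nodes, D.Dom N

/-- Root nodes: nodes without outgoing links. -/
def IsRoot (D : DevGraph E) (N : DGNode E) : Prop :=
  N ∈ D.nodes ∧ ∀ l ∈ D.links, l.src ≠ N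

/-- `Dom_{Roots(D)}`. -/
def DomRoots (D : DevGraph E) : Set E := {e | ∃ N, D.IsRoot N ∧ e ∈ D.Dom N}

/-- Global reachability `M →*σ N`: either `M = N` and `σ = id`, or there is a link
`M →σ' K` and `K →*σ'' N` with `σ = σ'' ∘ σ'`. -/
inductive Reaches (D : DevGraph E) : DGNode E → (E → E) → DGNode E → Prop
  | refl (N : DGNode E) : Reaches D N id N
  | step {l : DGLink E} {σ'' : E → E} {N : DGNode E} :
      l ∈ D.links → Reaches D l.tgt σ'' N → Reaches D l.src (σ'' ∘ l.mor) N

/-- `e` is provided in `N` iff `e ∈ Dom_D(N)` and `e ∉ Dom_D(M)` for every link `M →σ N`. -/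
def ProvidedIn (D : DevGraph E) (N : DGNode E) (e : E) : Prop :=
  e ∈ D.Dom N ∧ ∀ l ∈ D.links, l.tgt = N → e ∉ D.Dom l.src

/-- `e` is locally provided in `N` iff it is provided in `N` and `e ∈ dom^N`. -/
def LocallyProvidedIn (D : DevGraph E) (N : DGNode E) (e : E) : Prop :=
  D.ProvidedIn N e ∧ e ∈ N.localDom

/-- `e` is provided by a link `l : M →σ N` iff `e` is provided but not locally provided
in `N` and `σ(e') = e` for some `e' ∈ Dom_D(M)`. -/
def ProvidedByLink (D : DevGraph E) (l : DGLink E) (e : E) : Prop :=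
  l ∈ D.links ∧ D.ProvidedIn l.tgt e ∧ ¬ D.LocallyProvidedIn l.tgt e ∧
    ∃ e' ∈ D.Dom l.src, l.mor e' = e

/-- `e` is exclusively provided by `l` iff no other link provides `e`. -/
def ExclusivelyProvidedBy (D : DevGraph E) (l : DGLink E) (e : E) : Prop :=
  D.ProvidedByLink l e ∧ ∀ l' ∈ D.links, D.ProvidedByLink l' e → l' = l

/-- A location mapping for `D`: surjective, mapping local entities to their node,
and mapping each entity of `Dom_D` to the unique node providing it. -/
structure IsLocationMapping (D : DevGraph E) (loc : E → DGNode E) : Prop where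
  surj : ∀ N ∈ D.nodes, ∃ e ∈ D.DomAll, loc e = N
  local_loc : ∀ N ∈ D.nodes, ∀ e ∈ N.localDom, loc e = N
  provided : ∀ e ∈ D.DomAll, D.ProvidedIn (loc e) e
  unique : ∀ e ∈ D.DomAll, ∀ N, D.ProvidedIn N e → N = loc e

end DevGraph

/-- The relation `⊏` induced by a support mapping `Supp` on lemmas `Lem`:
`Φ ⊏ φ` iff `Φ ∈ Supp φ`, or `Φ ∈ Supp ψ` and `ψ ⊏ φ` for some lemma `ψ`. -/
inductive SuppBelow {E : Type*} (Supp : E → Set E) (Lem : Set E) : E → E → Prop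
  | base {Φ φ : E} : φ ∈ Lem → Φ ∈ Supp φ → SuppBelow Supp Lem Φ φ
  | trans {Φ ψ φ : E} : ψ ∈ Lem → Φ ∈ Supp ψ → SuppBelow Supp Lem ψ φ →
      SuppBelow Supp Lem Φ φ

/-- `Supp` is a support mapping for axioms `Ax` and lemmas `Lem`: each lemma is
supported by axioms and lemmas, and the induced relation `⊏` is well-founded. -/
structure IsSupportMapping {E : Type*} (Supp : E → Set E) (Ax Lem : Set E) : Prop where
  subset : ∀ φ ∈ Lem, Supp φ ⊆ Ax ∪ Lem
  wf : WellFounded (SuppBelow Supp Lem)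

section

variable {E : Type*} (kind : E → EKind)

/-- The global axioms of `N` in `D`. -/
def DevGraph.axiomsOf (D : DevGraph E) (N : DGNode E) : Set E :=
  {e | e ∈ D.Dom N ∧ kind e = EKind.ax}

/-- The global lemmas of `N` in `D`. -/
def DevGraph.lemmasOf (D : DevGraph E) (N : DGNode E) : Set E :=
  {e | e ∈ D.Dom N ∧ kind e = EKind.lem}

/-- The lemmas occurring in `D`. -/
def DevGraph.lemmasAll (D : DevGraph E) : Set E :=
  {e | e ∈ D.DomAll ∧ kind e = EKind.lem}

/-- `Supp` is a support mapping for the development graph `D`: for every node it is a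
support mapping for the global axioms and lemmas of that node. -/
def IsSupportMappingFor (Supp : E → Set E) (D : DevGraph E) : Prop :=
  ∀ N ∈ D.nodes, IsSupportMapping Supp (D.axiomsOf kind N) (D.lemmasOf kind N)

/-- `(D, loc, Supp)` is a structuring of `(Sig, Ax, Lem)`. -/
structure IsStructuring (D : DevGraph E) (loc : E → DGNode E) (Supp : E → Set E)
    (Sig Ax Lem : Set E) : Prop where
  supp_for : IsSupportMappingFor kind Supp D
  loc_map : D.IsLocationMapping loc
  roots_sig : {e | e ∈ D.DomRoots ∧ kind e = EKind.sig} = Sig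
  roots_ax : {e | e ∈ D.DomRoots ∧ kind e = EKind.ax} = Ax
  roots_lem : Lem ⊆ {e | e ∈ D.DomRoots ∧ kind e = EKind.lem}
  supp_reach : ∀ φ ∈ D.lemmasAll kind, ∀ ψ ∈ Supp φ,
    ∃ σ : E → E, D.Reaches (loc ψ) σ (loc φ) ∧ σ ψ = ψ

end

/-- `P = {N_1, …, N_k}`, `k > 1`, is a partitioning of `N`: the local signatures,
axioms and lemmas of the (distinct) `N_i` partition those of `N` as disjoint unions,
and each `N_i` has a nonempty local domain. -/
structure IsPartitioning {E : Type*} (N : DGNode E) {k : ℕ} (Ns : Fin k → DGNode E) :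
    Prop where
  one_lt : 1 < k
  inj : Function.Injective Ns
  sig_eq : N.sig = ⋃ i, (Ns i).sig
  ax_eq : N.ax = ⋃ i, (Ns i).ax
  lem_eq : N.lem = ⋃ i, (Ns i).lem
  sig_disj : ∀ i j, i ≠ j → Disjoint (Ns i).sig (Ns j).sig
  ax_disj : ∀ i j, i ≠ j → Disjoint (Ns i).ax (Ns j).ax
  lem_disj : ∀ i j, i ≠ j → Disjoint (Ns i).lem (Ns j).lem
  nonempty : ∀ i, (Ns i).localDom.Nonempty

/-- `Ni` (a part of a partitioning of `N`) is lemma independent: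
`Supp(ψ) ∩ (ax^N ∪ lem^N) ⊆ ax^{Ni} ∪ lem^{Ni}` for every `ψ ∈ lem^{Ni}`. -/
def LemmaIndependent {E : Type*} (Supp : E → Set E) (N Ni : DGNode E) : Prop :=
  ∀ ψ ∈ Ni.lem, Supp ψ ∩ (N.ax ∪ N.lem) ⊆ Ni.ax ∪ Ni.lem

/-- The restriction `σ|S` of a signature morphism to a set `S` (identity outside `S`). -/
noncomputable def restrictMor {E : Type*} (σ : E → E) (S : Set E) : E → E :=
  fun e => if e ∈ S then σ e else e

/-- `(D', loc')` is the horizontal split of `(D, loc)` with respect to the node `N` and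
the partitioning `N_1, …, N_k`: `N` is replaced by `N_1, …, N_k`, incoming links
`M →θ N` are replaced by `M →θ N_i` for all `i`, outgoing links `N →τ M` by
`N_i →τ|Dom_{D'}(N_i) M` for all `i`, all other links are kept, and `loc'(e) = N_i`
if `e ∈ dom^{N_i}` and `loc'(e) = loc(e)` otherwise. -/
structure IsHorizontalSplit {E : Type*} (D D' : DevGraph E) (N : DGNode E) {k : ℕ}
    (Ns : Fin k → DGNode E) (loc loc' : E → DGNode E) : Prop where
  mem : N ∈ D.nodes
  fresh : ∀ i, Ns i ∉ D.nodes \ {N}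
  nodes' : D'.nodes = Set.range Ns ∪ (D.nodes \ {N})
  links' : D'.links =
    {l | (l ∈ D.links ∧ l.src ≠ N ∧ l.tgt ≠ N)
      ∨ (∃ l0 ∈ D.links, l0.tgt = N ∧ ∃ i, l = ⟨l0.src, l0.mor, Ns i⟩)
      ∨ (∃ l0 ∈ D.links, l0.src = N ∧
          ∃ i, l = ⟨Ns i, restrictMor l0.mor (D'.Dom (Ns i)), l0.tgt⟩)}
  loc'_in : ∀ i, ∀ e ∈ (Ns i).localDom, loc' e = Ns i
  loc'_out : ∀ e, (∀ i, e ∉ (Ns i).localDom) → loc' e = loc e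

/-- `(D', loc')` is the vertical split of `(D, loc)` with respect to the node `N` and
the partitioning `{N_1, N_2}`: `N` is replaced by `N_1` and `N_2` joined by the link
`N_1 →id N_2`, incoming links `M →σ N` are replaced by `M →σ N_1`, outgoing links
`N →σ M` by `N_2 →σ M`, all other links are kept, and `loc'(e) = N_2` if `loc(e) = N`
and `e ∈ Dom_{D'}(N_2)`, `loc'(e) = N_1` if `loc(e) = N` and `e ∉ Dom_{D'}(N_2)`, and
`loc'(e) = loc(e)` otherwise. -/
structure IsVerticalSplit {E : Type*} (D D' : DevGraph E) (N N1 N2 : DGNode E)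
    (loc loc' : E → DGNode E) : Prop where
  mem : N ∈ D.nodes
  fresh1 : N1 ∉ D.nodes \ {N}
  fresh2 : N2 ∉ D.nodes \ {N}
  nodes' : D'.nodes = {N1, N2} ∪ (D.nodes \ {N})
  links' : D'.links =
    {l | (l ∈ D.links ∧ l.src ≠ N ∧ l.tgt ≠ N)
      ∨ l = ⟨N1, id, N2⟩
      ∨ (∃ l0 ∈ D.links, l0.tgt = N ∧ l = ⟨l0.src, l0.mor, N1⟩)
      ∨ (∃ l0 ∈ D.links, l0.src = N ∧ l = ⟨N2, l0.mor, l0.tgt⟩)}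
  loc'_N2 : ∀ e, loc e = N → e ∈ D'.Dom N2 → loc' e = N2
  loc'_N1 : ∀ e, loc e = N → e ∉ D'.Dom N2 → loc' e = N1
  loc'_other : ∀ e, loc e ≠ N → loc' e = loc e

/-- `(D', loc', Supp ∪ SuppN)` is the factorization of `(D, loc, Supp)` with respect to
the nodes `M_1, …, M_p` (imported via links `K_i →σ_{i,j} M_j` from `K_1, …, K_n`),
the fresh sets `sigN, axN, lemN`, the morphisms `θ_j` and `σ_i`, and the support
mapping `SuppN`; it includes all side conditions of the factorization rule. -/
structure IsFactorization {E : Type*} (kind : E → EKind) (D D' : DevGraph E)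
    (loc loc' : E → DGNode E) (Supp SuppN : E → Set E)
    {n p : ℕ} (Ks : Fin n → DGNode E) (Ms : Fin p → DGNode E)
    (σij : Fin n → Fin p → E → E)
    (sigN axN lemN : Set E) (θ : Fin p → E → E) (σ : Fin n → E → E)
    (N : DGNode E) (Nj : Fin p → DGNode E) : Prop where
  one_lt : 1 < p
  Ks_mem : ∀ i, Ks i ∈ D.nodes
  Ms_mem : ∀ j, Ms j ∈ D.nodes
  Ms_inj : Function.Injective Ms
  Ms_nonempty : ∀ j, ((Ms j).sig ∪ (Ms j).ax).Nonempty
  links_ij : ∀ i j, (⟨Ks i, σij i j, Ms j⟩ : DGLink E) ∈ D.links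
  fresh : (sigN ∪ axN ∪ lemN) ∩ D.DomAll = ∅
  kind_sig : ∀ e ∈ sigN, kind e = EKind.sig
  kind_ax : ∀ e ∈ axN, kind e = EKind.ax
  kind_lem : ∀ e ∈ lemN, kind e = EKind.lem
  mor_compat : ∀ i j, ∀ e ∈ D.Dom (Ks i), θ j (σ i e) = σij i j e
  mor_fresh : ∀ i j, ∀ e ∈ D.Dom (Ks i), σij i j e = e ∨ σij i j e ∉ D.DomAll
  sig_sub : ∀ j, (Ms j).sig ⊆ θ j '' sigN ∧ θ j '' sigN ⊆ D.Dom (Ms j)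
  ax_sub : ∀ j, (Ms j).ax ⊆ θ j '' axN ∧ θ j '' axN ⊆ D.Dom (Ms j)
  lem_wit : ∀ e ∈ lemN, ∃ l, θ l e ∈ (Ms l).lem
  lem_inj : ∀ e ∈ lemN, ∀ i j, θ i e = θ j e → i = j
  lem_loc : ∀ e ∈ lemN, ∀ j, θ j e ∈ D.DomAll → loc (θ j e) = Ms j
  suppN : IsSupportMapping SuppN (axN ∪ ⋃ i, σ i '' D.Dom (Ks i)) lemN
  N_def : N = ⟨sigN, axN, lemN⟩
  Nj_def : ∀ j, Nj j = ⟨∅, ∅, (Ms j).lem \ θ j '' lemN⟩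
  nodes' : D'.nodes = {N} ∪ Set.range Nj ∪ (D.nodes \ Set.range Ms)
  links' : D'.links =
    {l | (l ∈ D.links ∧ l.src ∉ Set.range Ms ∧ l.tgt ∉ Set.range Ms)
      ∨ (∃ i, l = ⟨Ks i, σ i, N⟩)
      ∨ (∃ j, l = ⟨N, θ j, Nj j⟩)
      ∨ (∃ l0 ∈ D.links, ∃ j, l0.tgt = Ms j ∧
          (∀ i, l0.src ≠ Ks i ∨ l0.mor ≠ σij i j) ∧ l = ⟨l0.src, l0.mor, Nj j⟩)
      ∨ (∃ l0 ∈ D.links, ∃ j, l0.src = Ms j ∧ l = ⟨Nj j, l0.mor, l0.tgt⟩)}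
  loc'_N : ∀ x, x ∈ D'.Dom N → (∀ i, x ∉ D'.Dom (Ks i)) → loc' x = N
  loc'_Nj : ∀ x j, ¬ (x ∈ D'.Dom N ∧ ∀ i, x ∉ D'.Dom (Ks i)) →
      x ∈ D'.Dom (Nj j) → (∀ l ∈ D'.links, l.tgt = Nj j → x ∉ D'.Dom l.src) →
      loc' x = Nj j
  loc'_other : ∀ x, ¬ (x ∈ D'.Dom N ∧ ∀ i, x ∉ D'.Dom (Ks i)) →
      (∀ j, ¬ (x ∈ D'.Dom (Nj j) ∧ ∀ l ∈ D'.links, l.tgt = Nj j → x ∉ D'.Dom l.src)) →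
      loc' x = loc x

/-- The link `l` is removable from the structuring `(D, loc, Supp)`, and
`D' = ⟨N, L \ {l}⟩` is the corresponding reduction. -/
structure IsRemovableLink {E : Type*} (kind : E → EKind) (D D' : DevGraph E)
    (loc : E → DGNode E) (Supp : E → Set E) (l : DGLink E) : Prop where
  mem : l ∈ D.links
  nodes' : D'.nodes = D.nodes
  links' : D'.links = D.links \ {l}
  cond1 : ∀ l' ∈ D.links, ∀ e ∈ D.Dom l'.src, D.ExclusivelyProvidedBy l' (l'.mor e) →
      l'.mor e ∈ D'.Dom l'.tgt ∧ l ≠ l'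
  cond2 : ∀ e ∈ D.DomAll, ∀ M, D.IsRoot M → ∀ σ : E → E, D.Reaches (loc e) σ M →
      ∃ M', D'.IsRoot M' ∧ D'.Reaches (loc e) σ M'
  cond3_supp : ∀ φ ∈ D.lemmasAll kind, Supp φ ⊆ D'.Dom (loc φ)
  cond3_sig : ∀ N' ∈ D.nodes, N'.sig ⊆ D'.Dom N'

/-! Splitting `N` into `N₁ →id N₂` does not change any domain: everything visible in `N` is
visible in `N₂` (the part from `N₁` arrives through the identity link), and conversely
`N₁`, `N₂` only ever see entities of `N`. Every other node keeps its domain, and the roots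
of `D'` are those of `D` with `N` renamed to `N₂`, so the root domains agree. -/

namespace IsPartitioning

variable {E : Type*} {N : DGNode E} {k : ℕ} {Ns : Fin k → DGNode E}

theorem localDom_eq (hP : IsPartitioning N Ns) : N.localDom = ⋃ i, (Ns i).localDom := by
  ext x
  simp only [DGNode.localDom, hP.sig_eq, hP.ax_eq, hP.lem_eq, Set.mem_union, Set.mem_iUnion]
  grind

theorem ne_part (hP : IsPartitioning N Ns) (i : Fin k) : N ≠ Ns i := by
  intro hNi
  obtain ⟨j, hji⟩ := Fintype.exists_ne_of_one_lt_card (by simpa using hP.one_lt) i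
  obtain ⟨x, hx⟩ := hP.nonempty j
  have hsig := hP.sig_disj j i hji
  have hax := hP.ax_disj j i hji
  have hlem := hP.lem_disj j i hji
  rw [← hNi] at hsig hax hlem
  rcases hx with (hx | hx) | hx
  · exact Set.disjoint_left.mp hsig hx (hP.sig_eq ▸ Set.mem_iUnion_of_mem j hx)
  · exact Set.disjoint_left.mp hax hx (hP.ax_eq ▸ Set.mem_iUnion_of_mem j hx)
  · exact Set.disjoint_left.mp hlem hx (hP.lem_eq ▸ Set.mem_iUnion_of_mem j hx)

end IsPartitioning

namespace DevGraph

variable {E : Type*} {D D' : DevGraph E}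

theorem localDom_subset_dom {M : DGNode E} (hM : M ∈ D.nodes) : M.localDom ⊆ D.Dom M :=
  fun _ => InDom.loc hM

theorem mor_mem_dom {l : DGLink E} (hl : l ∈ D.links) {e : E} (he : e ∈ D.Dom l.src) :
    l.mor e ∈ D.Dom l.tgt :=
  InDom.link hl he

theorem src_ne_tgt {l : DGLink E} (hl : l ∈ D.links) : l.src ≠ l.tgt := fun h =>
  D.acyclic l.tgt (Relation.TransGen.single ⟨l, hl, h, rfl⟩)

/-- `Dom_D` is the least node-indexed family containing the local domains and closed under
the links. -/
theorem dom_subset_dom_map (f : DGNode E → DGNode E)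
    (hloc : ∀ M ∈ D.nodes, M.localDom ⊆ D'.Dom (f M))
    (hlink : ∀ l ∈ D.links, ∀ e ∈ D'.Dom (f l.src), l.mor e ∈ D'.Dom (f l.tgt))
    (M : DGNode E) : D.Dom M ⊆ D'.Dom (f M) := by
  intro e he
  induction he with
  | loc hM he => exact hloc _ hM he
  | link hl _ ih => exact hlink _ hl _ ih

theorem domRoots_subset_domRoots_map (f : DGNode E → DGNode E)
    (hroot : ∀ M, D.IsRoot M → D'.IsRoot (f M)) (hdom : ∀ M, D.Dom M ⊆ D'.Dom (f M)) :
    D.DomRoots ⊆ D'.DomRoots := fun _ ⟨M, hM, he⟩ => ⟨f M, hroot M hM, hdom M he⟩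

end DevGraph

noncomputable def splitOrigin {E : Type*} (N N1 N2 M : DGNode E) : DGNode E :=
  if M = N1 ∨ M = N2 then N else M

namespace IsVerticalSplit

open DevGraph

variable {E : Type*} {D D' : DevGraph E} {N N1 N2 : DGNode E} {loc loc' : E → DGNode E}

theorem left_mem (hs : IsVerticalSplit D D' N N1 N2 loc loc') : N1 ∈ D'.nodes := by
  rw [hs.nodes']; exact Or.inl (Or.inl rfl)

theorem right_mem (hs : IsVerticalSplit D D' N N1 N2 loc loc') : N2 ∈ D'.nodes := by
  rw [hs.nodes']; exact Or.inl (Or.inr rfl)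

theorem mem_of_ne (hs : IsVerticalSplit D D' N N1 N2 loc loc') {M : DGNode E}
    (hM : M ∈ D.nodes) (hMN : M ≠ N) : M ∈ D'.nodes := by
  rw [hs.nodes']; exact Or.inr ⟨hM, hMN⟩

theorem mem_cases (hs : IsVerticalSplit D D' N N1 N2 loc loc') {M : DGNode E}
    (hM : M ∈ D'.nodes) : M = N1 ∨ M = N2 ∨ (M ∈ D.nodes ∧ M ≠ N) := by
  rw [hs.nodes'] at hM
  rcases hM with (h | h) | ⟨hM, hMN⟩
  exacts [Or.inl h, Or.inr (Or.inl h), Or.inr (Or.inr ⟨hM, hMN⟩)]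

theorem left_notMem (hs : IsVerticalSplit D D' N N1 N2 loc loc') (h : N1 ≠ N) :
    N1 ∉ D.nodes := fun hN1 => hs.fresh1 ⟨hN1, h⟩

theorem right_notMem (hs : IsVerticalSplit D D' N N1 N2 loc loc') (h : N2 ≠ N) :
    N2 ∉ D.nodes := fun hN2 => hs.fresh2 ⟨hN2, h⟩

theorem id_link_mem (hs : IsVerticalSplit D D' N N1 N2 loc loc') :
    (⟨N1, id, N2⟩ : DGLink E) ∈ D'.links := by
  rw [hs.links']; exact Or.inr (Or.inl rfl)

theorem link_mem (hs : IsVerticalSplit D D' N N1 N2 loc loc') {l : DGLink E}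
    (hl : l ∈ D.links) (hsrc : l.src ≠ N) (htgt : l.tgt ≠ N) : l ∈ D'.links := by
  rw [hs.links']; exact Or.inl ⟨hl, hsrc, htgt⟩

theorem incoming_link_mem (hs : IsVerticalSplit D D' N N1 N2 loc loc') {l : DGLink E}
    (hl : l ∈ D.links) (htgt : l.tgt = N) : (⟨l.src, l.mor, N1⟩ : DGLink E) ∈ D'.links := by
  rw [hs.links']; exact Or.inr (Or.inr (Or.inl ⟨l, hl, htgt, rfl⟩))

theorem outgoing_link_mem (hs : IsVerticalSplit D D' N N1 N2 loc loc') {l : DGLink E}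
    (hl : l ∈ D.links) (hsrc : l.src = N) : (⟨N2, l.mor, l.tgt⟩ : DGLink E) ∈ D'.links := by
  rw [hs.links']; exact Or.inr (Or.inr (Or.inr ⟨l, hl, hsrc, rfl⟩))

theorem dom_subset_dom_update (hs : IsVerticalSplit D D' N N1 N2 loc loc')
    (hloc : N.localDom ⊆ N1.localDom ∪ N2.localDom) (M : DGNode E) :
    D.Dom M ⊆ D'.Dom (Function.update id N N2 M) := by
  have via_N1 : ∀ e ∈ D'.Dom N1, e ∈ D'.Dom N2 := fun e he => mor_mem_dom hs.id_link_mem he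
  refine dom_subset_dom_map _ (fun M hM e he => ?_) (fun l hl e he => ?_) M
  · by_cases hMN : M = N
    · subst hMN
      rw [Function.update_self]
      rcases hloc he with h1 | h2
      exacts [via_N1 e (localDom_subset_dom hs.left_mem h1), localDom_subset_dom hs.right_mem h2]
    · rw [Function.update_of_ne hMN]
      exact localDom_subset_dom (hs.mem_of_ne hM hMN) he
  · by_cases htgt : l.tgt = N
    · have hsrc : l.src ≠ N := htgt ▸ src_ne_tgt hl
      rw [Function.update_of_ne hsrc] at he
      rw [htgt, Function.update_self]
      exact via_N1 _ (mor_mem_dom (hs.incoming_link_mem hl htgt) he)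
    · rw [Function.update_of_ne htgt]
      by_cases hsrc : l.src = N
      · rw [hsrc, Function.update_self] at he
        exact mor_mem_dom (hs.outgoing_link_mem hl hsrc) he
      · rw [Function.update_of_ne hsrc] at he
        exact mor_mem_dom (hs.link_mem hl hsrc htgt) he

theorem splitOrigin_of_mem (hs : IsVerticalSplit D D' N N1 N2 loc loc') {M : DGNode E}
    (hM : M ∈ D.nodes) : splitOrigin N N1 N2 M = M := by
  unfold splitOrigin
  split_ifs with h
  · rcases h with rfl | rfl
    exacts [(not_not.mp fun hne => hs.fresh1 ⟨hM, hne⟩).symm,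
      (not_not.mp fun hne => hs.fresh2 ⟨hM, hne⟩).symm]
  · rfl

theorem dom_subset_dom_splitOrigin (hs : IsVerticalSplit D D' N N1 N2 loc loc')
    (hloc : N1.localDom ∪ N2.localDom ⊆ N.localDom) (M : DGNode E) :
    D'.Dom M ⊆ D.Dom (splitOrigin N N1 N2 M) := by
  have origin_src {l : DGLink E} (hl : l ∈ D.links) := hs.splitOrigin_of_mem (D.src_mem l hl)
  have origin_tgt {l : DGLink E} (hl : l ∈ D.links) := hs.splitOrigin_of_mem (D.tgt_mem l hl)
  have part_sub_dom : N1.localDom ∪ N2.localDom ⊆ D.Dom N :=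
    hloc.trans (localDom_subset_dom hs.mem)
  refine dom_subset_dom_map _ (fun M hM e he => ?_) (fun l hl e he => ?_) M
  · rcases hs.mem_cases hM with rfl | rfl | ⟨hM, -⟩
    · simpa [splitOrigin] using part_sub_dom (Or.inl he)
    · simpa [splitOrigin] using part_sub_dom (Or.inr he)
    · rw [hs.splitOrigin_of_mem hM]
      exact localDom_subset_dom hM he
  · rw [hs.links'] at hl
    rcases hl with ⟨hl, -, -⟩ | rfl | ⟨l, hl, htgt, rfl⟩ | ⟨l, hl, hsrc, rfl⟩
    · rw [origin_src hl] at he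
      rw [origin_tgt hl]
      exact mor_mem_dom hl he
    · simpa [splitOrigin] using he
    · rw [origin_src hl] at he
      simpa [splitOrigin, ← htgt] using mor_mem_dom hl he
    · rw [show splitOrigin N N1 N2 N2 = l.src by simp [splitOrigin, hsrc]] at he
      rw [origin_tgt hl]
      exact mor_mem_dom hl he

theorem isRoot_update (hs : IsVerticalSplit D D' N N1 N2 loc loc') (h1 : N1 ∉ D.nodes)
    (h2 : N2 ∉ D.nodes) (h12 : N1 ≠ N2) {M : DGNode E} (hM : D.IsRoot M) :
    D'.IsRoot (Function.update id N N2 M) := by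
  obtain ⟨hM, hout⟩ := hM
  have ne_N2 {K : DGNode E} (hK : K ∈ D.nodes) : K ≠ N2 := fun h => h2 (h ▸ hK)
  by_cases hMN : M = N
  · subst hMN
    refine ⟨by simpa using hs.right_mem, fun l hl => ?_⟩
    rw [Function.update_self]
    rw [hs.links'] at hl
    rcases hl with ⟨hl, -, -⟩ | rfl | ⟨l, hl, -, rfl⟩ | ⟨l, hl, hsrc, rfl⟩
    exacts [ne_N2 (D.src_mem l hl), h12, ne_N2 (D.src_mem l hl), absurd hsrc (hout l hl)]
  · rw [Function.update_of_ne hMN, id]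
    refine ⟨hs.mem_of_ne hM hMN, fun l hl => ?_⟩
    rw [hs.links'] at hl
    rcases hl with ⟨hl, -, -⟩ | rfl | ⟨l, hl, -, rfl⟩ | ⟨l, hl, -, rfl⟩
    exacts [hout l hl, fun h : N1 = M => h1 (h ▸ hM), hout l hl, (ne_N2 hM).symm]

theorem isRoot_splitOrigin (hs : IsVerticalSplit D D' N N1 N2 loc loc') {M : DGNode E}
    (hM : D'.IsRoot M) : D.IsRoot (splitOrigin N N1 N2 M) := by
  obtain ⟨hM, hout⟩ := hM
  rcases hs.mem_cases hM with rfl | rfl | ⟨hM, hMN⟩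
  · exact absurd rfl (hout _ hs.id_link_mem)
  · refine ⟨by simpa [splitOrigin] using hs.mem, fun l hl hsrc => ?_⟩
    exact hout _ (hs.outgoing_link_mem hl (by simpa [splitOrigin] using hsrc)) rfl
  · rw [hs.splitOrigin_of_mem hM]
    refine ⟨hM, fun l hl hsrc => ?_⟩
    by_cases htgt : l.tgt = N
    · exact hout _ (hs.incoming_link_mem hl htgt) hsrc
    · exact hout l (hs.link_mem hl (hsrc ▸ hMN) htgt) hsrc

end IsVerticalSplit

theorem vertical_split_dom_roots_general {E : Type*}
    (D D' : DevGraph E) (loc loc' : E → DGNode E)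
    (N N1 N2 : DGNode E)
    (hP : IsPartitioning N ![N1, N2])
    (hsplit : IsVerticalSplit D D' N N1 N2 loc loc') :
    D.Dom N = D'.Dom N2 ∧ D'.DomRoots = D.DomRoots := by
  have hloc : N.localDom = N1.localDom ∪ N2.localDom := by
    rw [hP.localDom_eq]; ext; simp [Fin.exists_fin_two]
  have h12 : N1 ≠ N2 := fun h => absurd (hP.inj (by simp [h] : ![N1, N2] 0 = ![N1, N2] 1))
    (by decide)
  have h1 : N1 ∉ D.nodes := hsplit.left_notMem (by simpa using (hP.ne_part 0).symm)
  have h2 : N2 ∉ D.nodes := hsplit.right_notMem (by simpa using (hP.ne_part 1).symm)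
  have fwd := hsplit.dom_subset_dom_update hloc.subset
  have bwd := hsplit.dom_subset_dom_splitOrigin hloc.superset
  have dom_sub : D.Dom N ⊆ D'.Dom N2 := by simpa using fwd N
  have dom_sup : D'.Dom N2 ⊆ D.Dom N := by simpa [splitOrigin] using bwd N2
  refine ⟨dom_sub.antisymm dom_sup, subset_antisymm ?_ ?_⟩
  · exact DevGraph.domRoots_subset_domRoots_map _ (fun _ => hsplit.isRoot_splitOrigin) bwd
  · exact DevGraph.domRoots_subset_domRoots_map _ (fun _ => hsplit.isRoot_update h1 h2 h12) fwd

/-- After a vertical split, `Dom_D(N) = Dom_{D'}(N_2)`, and consequently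
the domains of the root nodes are unchanged. -/
theorem vertical_split_dom_roots {E : Type*} (kind : E → EKind)
    (D D' : DevGraph E) (loc loc' : E → DGNode E) (Supp : E → Set E)
    (Sig Ax Lem : Set E) (N N1 N2 : DGNode E)
    (hS : IsStructuring kind D loc Supp Sig Ax Lem)
    (hP : IsPartitioning N ![N1, N2])
    (hLI : LemmaIndependent Supp N N1)
    (hsplit : IsVerticalSplit D D' N N1 N2 loc loc') :
    D.Dom N = D'.Dom N2 ∧ D'.DomRoots = D.DomRoots :=
  vertical_split_dom_roots_general D D' loc loc' N N1 N2 hP hsplit
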